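/- For all integers p, q ≥ 0, let W(p,q) denote the (q+1)×(q+1) matrix whose first column has entries W_{i,1} = ⟨p⟩_{i-1} for 1 ≤ i ≤ q+1, and whose remaining entries are W_{i,j} = (-1)^{i-j} · C(i-1, j-1) · ⟨p+1⟩_{i-j} for 1 ≤ i ≤ q+1 and 2 ≤ j ≤ q+1 (entries with i-j < 0 being 0). Then det W(p,q) = (-1)^{p-q} · (q!/p!) · det W(q,p). -/

import Mathlib

/-! Let `D(p, q)` be the Delannoy numbers, whose generating function in `q` is
`(1 + X)^p / (1 - X)^(p + 1)`. Moving the first column of `W(p, q)` to the end gives the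
lower unitriangular matrix `B` with `B i k = (-1)^(i-k) C(i, k) ⟨p+1⟩_(i-k)`, except that its
last column is `c i = ⟨p⟩_i`. On vectors of the form `(m! x_m)_m`, `B` acts as multiplication
of `∑ x_m X^m` by `(1 - X)^(p + 1)`, so `B (m! D(p, m))_m = c`, and Cramer's rule gives
`det W(p, q) = (-1)^q q! D(p, q)`. The theorem is then the symmetry `D(p, q) = D(q, p)`. -/

/-- The `(q+1) × (q+1)` matrix `W(p,q)` (indexed from 0): the first column has entries
`⟨p⟩_i`, and for columns `j ≥ 1` the entry in row `i` is
`(-1)^{i+1-j} · C(i, j-1) · ⟨p+1⟩_{i+1-j}`, with entries above the superdiagonal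
(i.e. with `j > i + 1`) being `0` since the binomial coefficient vanishes there. -/
def delannoyMatrix (p q : ℕ) : Matrix (Fin (q + 1)) (Fin (q + 1)) ℚ :=
  Matrix.of fun i j =>
    if (j : ℕ) = 0 then (p.descFactorial (i : ℕ) : ℚ)
    else (-1 : ℚ) ^ ((i : ℕ) + 1 - (j : ℕ)) * (Nat.choose (i : ℕ) ((j : ℕ) - 1)) *
      ((p + 1).descFactorial ((i : ℕ) + 1 - (j : ℕ)) : ℚ)

open Finset Nat

def delannoy : ℕ → ℕ → ℕ
  | _, 0 => 1
  | 0, _ + 1 => 1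
  | p + 1, q + 1 => delannoy p (q + 1) + delannoy (p + 1) q + delannoy p q

@[simp] lemma delannoy_zero_right (p : ℕ) : delannoy p 0 = 1 := by cases p <;> simp [delannoy]

@[simp] lemma delannoy_zero_left (q : ℕ) : delannoy 0 q = 1 := by cases q <;> simp [delannoy]

lemma delannoy_succ_succ (p q : ℕ) :
    delannoy (p + 1) (q + 1) = delannoy p (q + 1) + delannoy (p + 1) q + delannoy p q := by
  simp [delannoy]

lemma delannoy_comm (p q : ℕ) : delannoy p q = delannoy q p := by
  induction p generalizing q with
  | zero => simp
  | succ p ihp =>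
    induction q with
    | zero => simp
    | succ q ihq => rw [delannoy_succ_succ, delannoy_succ_succ, ihp, ihq, ihp]; ring

lemma Nat.choose_mul_descFactorial_mul_factorial {i m : ℕ} (h : m ≤ i) (a : ℕ) :
    i.choose m * a.descFactorial (i - m) * m ! = i ! * a.choose (i - m) := by
  rw [descFactorial_eq_factorial_mul_choose, ← choose_mul_factorial_mul_factorial h]
  ring

section Series

open PowerSeries

lemma PowerSeries.coeff_one_add_X_pow {R : Type*} [Semiring R] (m k : ℕ) :
    coeff k ((1 + X : R⟦X⟧) ^ m) = m.choose k := by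
  rw [← Polynomial.coe_X, ← Polynomial.coe_one, ← Polynomial.coe_add, ← Polynomial.coe_pow,
    Polynomial.coeff_coe, Polynomial.coeff_one_add_X_pow]

variable {R : Type*} [CommRing R]

lemma PowerSeries.coeff_one_sub_X_pow (m k : ℕ) :
    coeff k ((1 - X : R⟦X⟧) ^ m) = (-1) ^ k * m.choose k := by
  have h : (1 - X : R⟦X⟧) ^ m = rescale (-1) ((1 + X) ^ m) := by
    simp [sub_eq_add_neg]
  rw [h, coeff_rescale, coeff_one_add_X_pow]

variable (R) in
def delannoySeries (p : ℕ) : R⟦X⟧ := PowerSeries.mk fun q ↦ (delannoy p q : R)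

lemma one_sub_X_mul_delannoySeries_zero : (1 - X) * delannoySeries R 0 = 1 := by
  ext (_ | n) <;> simp [delannoySeries, sub_mul, coeff_succ_X_mul]

lemma one_sub_X_mul_delannoySeries_succ (p : ℕ) :
    (1 - X) * delannoySeries R (p + 1) = (1 + X) * delannoySeries R p := by
  ext (_ | n)
  · simp [delannoySeries, sub_mul, add_mul]
  · simp [delannoySeries, sub_mul, add_mul, coeff_succ_X_mul, delannoy_succ_succ]; ring

lemma one_sub_X_pow_mul_delannoySeries (p : ℕ) :
    (1 - X) ^ (p + 1) * delannoySeries R p = (1 + X) ^ p := by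
  induction p with
  | zero => simpa using one_sub_X_mul_delannoySeries_zero
  | succ p ih =>
    rw [pow_succ, mul_assoc, one_sub_X_mul_delannoySeries_succ, mul_left_comm, ih, pow_succ,
      mul_comm]

lemma sum_antidiagonal_delannoy_mul_choose (p n : ℕ) :
    ∑ kl ∈ antidiagonal n, (delannoy p kl.1 : R) * ((-1) ^ kl.2 * (p + 1).choose kl.2) =
      p.choose n := by
  have h := congrArg (coeff n) (one_sub_X_pow_mul_delannoySeries (R := R) p)
  rw [mul_comm, coeff_mul, coeff_one_add_X_pow] at h
  simpa [delannoySeries, coeff_one_sub_X_pow] using h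

end Series

section Matrices

open Matrix

lemma Matrix.det_updateCol_mulVec {n R : Type*} [Fintype n] [DecidableEq n] [CommRing R]
    (A : Matrix n n R) (j : n) (x : n → R) : (A.updateCol j (A *ᵥ x)).det = x j * A.det := by
  rw [← smul_eq_mul, ← det_updateCol_sum]
  congr
  ext k
  simp [mulVec, dotProduct, mul_comm]

def delannoyLower (p n : ℕ) : Matrix (Fin n) (Fin n) ℚ :=
  of fun i k ↦
    (-1) ^ ((i : ℕ) - k) * ((i : ℕ).choose k) * ((p + 1).descFactorial ((i : ℕ) - k))

lemma det_delannoyLower (p n : ℕ) : (delannoyLower p n).det = 1 := by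
  have hlower : (delannoyLower p n).IsLowerTriangular := fun i k (h : i < k) ↦ by
    simp [delannoyLower, choose_eq_zero_of_lt h]
  rw [det_of_isLowerTriangular _ hlower]
  simp [delannoyLower]

lemma delannoyLower_mulVec (p n : ℕ) :
    delannoyLower p n *ᵥ (fun m : Fin n ↦ ((m : ℕ) ! * delannoy p m : ℚ)) =
      fun i : Fin n ↦ (p.descFactorial i : ℚ) := by
  ext i
  set g : ℕ → ℚ := fun m ↦
    (-1) ^ ((i : ℕ) - m) * ((i : ℕ).choose m) * ((p + 1).descFactorial ((i : ℕ) - m)) *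
      (m ! * delannoy p m)
  have hg : ∀ m ∈ range (i + 1), g m =
      (i ! : ℚ) * (delannoy p m * ((-1) ^ ((i : ℕ) - m) * (p + 1).choose ((i : ℕ) - m))) := by
    intro m hm
    have key := congrArg (Nat.cast : ℕ → ℚ)
      (choose_mul_descFactorial_mul_factorial (mem_range_succ_iff.mp hm) (p + 1))
    push_cast at key
    linear_combination ((-1) ^ ((i : ℕ) - m) * delannoy p m : ℚ) * key
  calc (delannoyLower p n *ᵥ fun m ↦ ((m : ℕ) ! * delannoy p m : ℚ)) i
      = ∑ m ∈ range n, g m := Fin.sum_univ_eq_sum_range g n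
    _ = ∑ m ∈ range (i + 1), g m := by
      refine (sum_subset (fun m hm ↦ ?_) fun m _ hm ↦ ?_).symm
      · simp only [mem_range] at hm ⊢; omega
      · simp [g, choose_eq_zero_of_lt (by simpa using hm : (i : ℕ) < m)]
    _ = (i ! : ℚ) * p.choose i := by
      rw [sum_congr rfl hg, ← mul_sum, ← sum_antidiagonal_delannoy_mul_choose p i,
        Nat.sum_antidiagonal_eq_sum_range_succ
          (fun k l ↦ (delannoy p k : ℚ) * ((-1) ^ l * (p + 1).choose l))]
    _ = p.descFactorial i := by rw [descFactorial_eq_factorial_mul_choose]; push_cast; rfl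

lemma delannoyMatrix_submatrix_finRotate (p q : ℕ) :
    (delannoyMatrix p q).submatrix id (finRotate (q + 1)) =
      (delannoyLower p (q + 1)).updateCol (Fin.last q)
        fun i ↦ (p.descFactorial (i : ℕ) : ℚ) := by
  ext i j
  induction j using Fin.lastCases with
  | last => simp [delannoyMatrix]
  | cast k => simp [delannoyMatrix, delannoyLower, (Fin.castSucc_lt_last k).ne]

lemma det_delannoyMatrix (p q : ℕ) :
    (delannoyMatrix p q).det = (-1) ^ q * (q ! * delannoy p q) := by
  have h := det_permute' (finRotate (q + 1)) (delannoyMatrix p q)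
  rw [delannoyMatrix_submatrix_finRotate, ← delannoyLower_mulVec, det_updateCol_mulVec,
    det_delannoyLower, sign_finRotate] at h
  push_cast [Fin.val_last, mul_one, Nat.add_sub_cancel] at h
  rw [h, ← mul_assoc, ← mul_pow, neg_one_mul, neg_neg, one_pow, one_mul]

end Matrices

/-- The symmetry relation `det W(p,q) = (-1)^{p-q} · (q!/p!) · det W(q,p)`. -/
theorem delannoyMatrix_det_symm (p q : ℕ) :
    (delannoyMatrix p q).det =
      (-1 : ℚ) ^ ((p : ℤ) - (q : ℤ)) * ((q.factorial : ℚ) / (p.factorial : ℚ)) *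
        (delannoyMatrix q p).det := by
  rw [det_delannoyMatrix, det_delannoyMatrix, delannoy_comm q p]
  have hsign : (-1 : ℚ) ^ ((p : ℤ) - q) * (-1) ^ p = (-1) ^ q := by
    rw [zpow_sub₀ (by norm_num), zpow_natCast, zpow_natCast, div_mul_eq_mul_div, ← pow_add,
      ← two_mul, pow_mul, neg_one_sq, one_pow, one_div, ← inv_pow, inv_neg_one]
  have hp : (p ! : ℚ) ≠ 0 := by positivity
  rw [← hsign]
  field_simp
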